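/- Let 1 ≤ p₁ ≤ p₂ < ∞, let φ₁ ∈ G_{p₁} and φ₂ ∈ G_{p₂}. If wℓ^{p₂}_{φ₂} ⊆ wℓ^{p₁}_{φ₁} (i.e., every sequence x with ‖x‖_{wℓ^{p₂}_{φ₂}} < ∞ satisfies ‖x‖_{wℓ^{p₁}_{φ₁}} < ∞), then there exists C > 0 such that ‖x‖_{wℓ^{p₁}_{φ₁}} ≤ C ‖x‖_{wℓ^{p₂}_{φ₂}} for every x ∈ wℓ^{p₂}_{φ₂}. -/

import Mathlib

/-!
If `φ₂ ≤ C φ₁` at all odd arguments, then, since the proportion `|{k ∈ S_{m,N} : |x_k| > γ}|/(2N+1)`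
is at most `1` and `1/p₁ ≥ 1/p₂`, every term of the supremum defining `‖x‖_{wℓ^{p₁}_{φ₁}}` is at most
`C` times the corresponding term for `‖x‖_{wℓ^{p₂}_{φ₂}}`.

The inclusion forces such a `C`. Otherwise choose `N_j` with `φ₂(2N_j+1) > 2·4^j φ₁(2N_j+1)` and let `x`
equal `2^{-j} φ₂(2N_j+1)` on pairwise disjoint blocks `S_{m_j,N_j}`. Because `φ₂ ∈ G_{p₂}`, a window
`S_{m,N}` meets block `j` in a set whose contribution is at most a constant times `2^{-j}`, and
`t ↦ t^{1/p₂}` is subadditive, so `x ∈ wℓ^{p₂}_{φ₂}`; but testing the `wℓ^{p₁}_{φ₁}` norm on the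
whole block `j` at height `2^{-j-1} φ₂(2N_j+1)` gives at least `2^j`.
-/

open scoped ENNReal NNReal BigOperators

/-- The discrete "ball" `S_{m,N} = {m-N, …, m+N}` as a finite set of integers. -/
noncomputable def S (m : ℤ) (N : ℕ) : Finset ℤ := Finset.Icc (m - N) (m + N)

open Classical in
/-- The cardinality of `{k ∈ S_{m,N} : |x_k| > γ}`. -/
noncomputable def weakCard (x : ℤ → ℂ) (m : ℤ) (N : ℕ) (γ : ℝ≥0) : ℕ :=
  ((S m N).filter (fun k => γ < ‖x k‖₊)).card

/-- The generalized weak type discrete Morrey norm `‖x‖_{wℓ^p_φ}`. -/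
noncomputable def wgMorreyNorm (p : ℝ) (φ : ℕ → ℝ) (x : ℤ → ℂ) : ℝ≥0∞ :=
  ⨆ (m : ℤ) (N : ℕ) (γ : ℝ≥0) (_ : 0 < γ),
    (ENNReal.ofReal (φ (2 * N + 1)))⁻¹ * (γ : ℝ≥0∞) *
      ((weakCard x m N γ : ℝ≥0∞) / (2 * (N : ℝ≥0∞) + 1)) ^ (1 / p)

noncomputable def weakTerm (p : ℝ) (φ : ℕ → ℝ) (x : ℤ → ℂ) (m : ℤ) (N : ℕ) (γ : ℝ≥0) : ℝ≥0∞ :=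
  (ENNReal.ofReal (φ (2 * N + 1)))⁻¹ * γ *
    ((weakCard x m N γ : ℝ≥0∞) / (2 * (N : ℝ≥0∞) + 1)) ^ (1 / p)

section WeakTerm

variable {p : ℝ} {φ : ℕ → ℝ} {x : ℤ → ℂ}

lemma weakTerm_le_wgMorreyNorm (m : ℤ) (N : ℕ) {γ : ℝ≥0} (hγ : 0 < γ) :
    weakTerm p φ x m N γ ≤ wgMorreyNorm p φ x :=
  le_iSup_of_le m <| le_iSup_of_le N <| le_iSup_of_le γ <| le_iSup_of_le hγ le_rfl

lemma wgMorreyNorm_le {B : ℝ≥0∞} (h : ∀ m N γ, 0 < γ → weakTerm p φ x m N γ ≤ B) :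
    wgMorreyNorm p φ x ≤ B :=
  iSup_le fun m => iSup_le fun N => iSup_le fun γ => iSup_le fun hγ => h m N γ hγ

end WeakTerm

lemma card_S (m : ℤ) (N : ℕ) : (S m N).card = 2 * N + 1 := by
  rw [S, Int.card_Icc]; omega

lemma two_mul_add_one_eq_natCast (N : ℕ) : 2 * (N : ℝ≥0∞) + 1 = ((2 * N + 1 : ℕ) : ℝ≥0∞) := by
  push_cast; rfl

lemma natCast_div_two_mul_add_one_le_one {c N : ℕ} (h : c ≤ 2 * N + 1) :
    (c : ℝ≥0∞) / (2 * N + 1) ≤ 1 := by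
  rw [two_mul_add_one_eq_natCast]
  exact ENNReal.div_le_of_le_mul (by rw [one_mul]; exact_mod_cast h)

lemma natCast_div_two_mul_add_one_eq_ofReal (c N : ℕ) :
    (c : ℝ≥0∞) / (2 * N + 1) = ENNReal.ofReal ((c : ℝ) / (2 * N + 1)) := by
  rw [ENNReal.ofReal_div_of_pos (by positivity)]
  norm_cast

lemma weakCard_le (x : ℤ → ℂ) (m : ℤ) (N : ℕ) (γ : ℝ≥0) : weakCard x m N γ ≤ 2 * N + 1 :=
  (Finset.card_filter_le _ _).trans_eq (card_S m N)

lemma inv_ofReal_le_mul_inv_ofReal {s t C : ℝ} (hC : 0 < C) (h : t ≤ C * s) :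
    (ENNReal.ofReal s)⁻¹ ≤ ENNReal.ofReal C * (ENNReal.ofReal t)⁻¹ := by
  have hC₀ : ENNReal.ofReal C ≠ 0 := ENNReal.ofReal_pos.2 hC |>.ne'
  calc (ENNReal.ofReal s)⁻¹
      = ENNReal.ofReal C * (ENNReal.ofReal C * ENNReal.ofReal s)⁻¹ := by
        rw [ENNReal.mul_inv (.inr ENNReal.ofReal_ne_top) (.inl ENNReal.ofReal_ne_top),
          ← mul_assoc, ENNReal.mul_inv_cancel hC₀ ENNReal.ofReal_ne_top, one_mul]
    _ ≤ ENNReal.ofReal C * (ENNReal.ofReal t)⁻¹ := by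
        rw [← ENNReal.ofReal_mul hC.le]
        gcongr

theorem wgMorreyNorm_le_mul_of_le_mul {p₁ p₂ : ℝ} (hp₁ : 0 < p₁) (hp : p₁ ≤ p₂)
    {φ₁ φ₂ : ℕ → ℝ} {C : ℝ} (hC : 0 < C) (hφ : ∀ N : ℕ, φ₂ (2 * N + 1) ≤ C * φ₁ (2 * N + 1))
    (x : ℤ → ℂ) : wgMorreyNorm p₁ φ₁ x ≤ ENNReal.ofReal C * wgMorreyNorm p₂ φ₂ x := by
  refine wgMorreyNorm_le fun m N γ hγ => ?_
  have hexp : ((weakCard x m N γ : ℝ≥0∞) / (2 * N + 1)) ^ (1 / p₁) ≤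
      ((weakCard x m N γ : ℝ≥0∞) / (2 * N + 1)) ^ (1 / p₂) :=
    ENNReal.rpow_le_rpow_of_exponent_ge (natCast_div_two_mul_add_one_le_one (weakCard_le x m N γ))
      (one_div_le_one_div_of_le hp₁ hp)
  calc weakTerm p₁ φ₁ x m N γ
      ≤ ENNReal.ofReal C * (ENNReal.ofReal (φ₂ (2 * N + 1)))⁻¹ * γ *
          ((weakCard x m N γ : ℝ≥0∞) / (2 * N + 1)) ^ (1 / p₂) := by
        unfold weakTerm
        gcongr
        exact inv_ofReal_le_mul_inv_ofReal hC (hφ N)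
    _ ≤ ENNReal.ofReal C * wgMorreyNorm p₂ φ₂ x := by
        rw [mul_assoc, mul_assoc, ← mul_assoc _ (γ : ℝ≥0∞)]
        exact mul_le_mul_right (weakTerm_le_wgMorreyNorm m N hγ) _

lemma weakTerm_le_sum {p : ℝ} (hp : 1 ≤ p) (φ : ℕ → ℝ) {x : ℤ → ℂ} {m : ℤ} {N : ℕ} (γ : ℝ≥0)
    {ι : Type*} (t : Finset ι) (c : ι → ℕ) (hc : weakCard x m N γ ≤ ∑ j ∈ t, c j) :
    weakTerm p φ x m N γ ≤
      ∑ j ∈ t, (ENNReal.ofReal (φ (2 * N + 1)))⁻¹ * γ * ((c j : ℝ≥0∞) / (2 * N + 1)) ^ (1 / p) := by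
  have hq₀ : (0 : ℝ) < 1 / p := by positivity
  have hq₁ : 1 / p ≤ 1 := (div_le_one (zero_lt_one.trans_le hp)).2 hp
  calc weakTerm p φ x m N γ
      ≤ (ENNReal.ofReal (φ (2 * N + 1)))⁻¹ * γ *
          (∑ j ∈ t, (c j : ℝ≥0∞) / (2 * N + 1)) ^ (1 / p) := by
        simp only [weakTerm, div_eq_mul_inv, ← Finset.sum_mul]
        gcongr
        exact_mod_cast hc
    _ ≤ (ENNReal.ofReal (φ (2 * N + 1)))⁻¹ * γ *
          ∑ j ∈ t, ((c j : ℝ≥0∞) / (2 * N + 1)) ^ (1 / p) := by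
        gcongr
        exact Finset.le_sum_of_subadditive (· ^ (1 / p)) (ENNReal.zero_rpow_of_pos hq₀).le
          (fun u v => ENNReal.rpow_add_le_add_rpow u v hq₀.le hq₁) _ _
    _ = _ := Finset.mul_sum _ _ _

/-- `φ ∈ G_p` with explicit constants, read at the odd arguments `2N+1` only. -/
structure IsGpWith (p : ℝ) (φ : ℕ → ℝ) (Cd Ci : ℝ) : Prop where
  pos : ∀ N : ℕ, 0 < φ (2 * N + 1)
  const_pos : 0 < Cd
  almostDecreasing : ∀ M N : ℕ, M ≤ N → Cd * φ (2 * N + 1) ≤ φ (2 * M + 1)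
  almostIncreasing : ∀ M N : ℕ, M ≤ N →
    (2 * (M : ℝ) + 1) ^ (1 / p) * φ (2 * M + 1) ≤
      Ci * ((2 * (N : ℝ) + 1) ^ (1 / p) * φ (2 * N + 1))

namespace IsGpWith

variable {p : ℝ} {φ : ℕ → ℝ} {Cd Ci : ℝ}

lemma rpow_div_le (hφ : IsGpWith p φ Cd Ci) (hp : 0 ≤ p) {c N N₀ : ℕ}
    (hc : c ≤ 2 * N + 1) (hc₀ : c ≤ 2 * N₀ + 1) :
    ((c : ℝ) / (2 * N + 1)) ^ (1 / p) / φ (2 * N + 1) ≤ max Cd⁻¹ Ci / φ (2 * N₀ + 1) := by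
  have hφN := hφ.pos N
  have hφN₀ := hφ.pos N₀
  have hCd := hφ.const_pos
  rcases le_total N N₀ with hN | hN
  · calc ((c : ℝ) / (2 * N + 1)) ^ (1 / p) / φ (2 * N + 1)
        ≤ 1 / φ (2 * N + 1) := by
          gcongr
          refine Real.rpow_le_one (by positivity) ?_ (by positivity)
          exact div_le_one_of_le₀ (by exact_mod_cast hc) (by positivity)
      _ ≤ 1 / (Cd * φ (2 * N₀ + 1)) := by
          gcongr
          exact hφ.almostDecreasing N N₀ hN
      _ = Cd⁻¹ / φ (2 * N₀ + 1) := by field_simp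
      _ ≤ max Cd⁻¹ Ci / φ (2 * N₀ + 1) := by gcongr; exact le_max_left _ _
  · calc ((c : ℝ) / (2 * N + 1)) ^ (1 / p) / φ (2 * N + 1)
        ≤ ((2 * N₀ + 1 : ℝ) / (2 * N + 1)) ^ (1 / p) / φ (2 * N + 1) := by
          gcongr
          exact_mod_cast hc₀
      _ = (2 * N₀ + 1 : ℝ) ^ (1 / p) / ((2 * N + 1 : ℝ) ^ (1 / p) * φ (2 * N + 1)) := by
          rw [Real.div_rpow (by positivity) (by positivity), div_div]
      _ ≤ Ci / φ (2 * N₀ + 1) := by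
          rw [div_le_div_iff₀ (by positivity) hφN₀]
          exact hφ.almostIncreasing N₀ N hN
      _ ≤ max Cd⁻¹ Ci / φ (2 * N₀ + 1) := by gcongr; exact le_max_right _ _

lemma blockTerm_le (hφ : IsGpWith p φ Cd Ci) (hp : 0 ≤ p) {γ a : ℝ≥0} (hγ : γ ≤ a)
    {c N N₀ : ℕ} (hc : c ≤ 2 * N + 1) (hc₀ : c ≤ 2 * N₀ + 1) :
    (ENNReal.ofReal (φ (2 * N + 1)))⁻¹ * γ * ((c : ℝ≥0∞) / (2 * N + 1)) ^ (1 / p) ≤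
      ENNReal.ofReal (max Cd⁻¹ Ci) * (a / ENNReal.ofReal (φ (2 * N₀ + 1))) := by
  have hmax : 0 ≤ max Cd⁻¹ Ci := le_max_of_le_left (inv_nonneg.2 hφ.const_pos.le)
  have hreal : (γ : ℝ) * (((c : ℝ) / (2 * N + 1)) ^ (1 / p) / φ (2 * N + 1)) ≤
      max Cd⁻¹ Ci * (a / φ (2 * N₀ + 1)) := by
    rw [mul_div_left_comm _ (a : ℝ)]
    exact mul_le_mul hγ (hφ.rpow_div_le hp hc hc₀)
      (div_nonneg (by positivity) (hφ.pos N).le) a.coe_nonneg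
  calc (ENNReal.ofReal (φ (2 * N + 1)))⁻¹ * γ * ((c : ℝ≥0∞) / (2 * N + 1)) ^ (1 / p)
      = ENNReal.ofReal ((γ : ℝ) * (((c : ℝ) / (2 * N + 1)) ^ (1 / p) / φ (2 * N + 1))) := by
        rw [natCast_div_two_mul_add_one_eq_ofReal, ENNReal.ofReal_rpow_of_nonneg (by positivity)
          (by positivity), ENNReal.ofReal_mul γ.coe_nonneg, ENNReal.ofReal_div_of_pos (hφ.pos N),
          ENNReal.ofReal_coe_nnreal]
        simp only [div_eq_mul_inv]
        ring
    _ ≤ ENNReal.ofReal (max Cd⁻¹ Ci * (a / φ (2 * N₀ + 1))) := ENNReal.ofReal_le_ofReal hreal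
    _ = ENNReal.ofReal (max Cd⁻¹ Ci) * (a / ENNReal.ofReal (φ (2 * N₀ + 1))) := by
        rw [ENNReal.ofReal_mul hmax, ENNReal.ofReal_div_of_pos (hφ.pos N₀),
          ENNReal.ofReal_coe_nnreal]

theorem wgMorreyNorm_le_tsum (hφ : IsGpWith p φ Cd Ci) (hp : 1 ≤ p) {x : ℤ → ℂ}
    (m : ℕ → ℤ) (N : ℕ → ℕ) (a : ℕ → ℝ≥0)
    (hx : ∀ k, x k ≠ 0 → ∃ j, k ∈ S (m j) (N j) ∧ ‖x k‖₊ ≤ a j) :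
    wgMorreyNorm p φ x ≤
      ENNReal.ofReal (max Cd⁻¹ Ci) * ∑' j, a j / ENNReal.ofReal (φ (2 * N j + 1)) := by
  classical
  choose! idx hidx using hx
  refine wgMorreyNorm_le fun m₀ N₀ γ hγ => ?_
  set s := (S m₀ N₀).filter (fun k => γ < ‖x k‖₊)
  set c : ℕ → ℕ := fun j => (s.filter (fun k => idx k = j)).card
  have hxs : ∀ k ∈ s, x k ≠ 0 := fun k hk => nnnorm_pos.1 (hγ.trans (Finset.mem_filter.1 hk).2)
  have hcard : weakCard x m₀ N₀ γ = ∑ j ∈ s.image idx, c j := by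
    rw [weakCard]
    convert Finset.card_eq_sum_card_image idx s
  have hblock : ∀ j ∈ s.image idx,
      (ENNReal.ofReal (φ (2 * N₀ + 1)))⁻¹ * γ * ((c j : ℝ≥0∞) / (2 * N₀ + 1)) ^ (1 / p) ≤
        ENNReal.ofReal (max Cd⁻¹ Ci) * (a j / ENNReal.ofReal (φ (2 * N j + 1))) := by
    intro j hj
    obtain ⟨k, hk, rfl⟩ := Finset.mem_image.1 hj
    have hγa : γ ≤ a (idx k) := (Finset.mem_filter.1 hk).2.le.trans (hidx k (hxs k hk)).2
    have hc₀ : c (idx k) ≤ 2 * N₀ + 1 :=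
      (Finset.card_le_card ((Finset.filter_subset _ _).trans (Finset.filter_subset _ _))).trans_eq
        (card_S _ _)
    have hc : c (idx k) ≤ 2 * N (idx k) + 1 := by
      refine (Finset.card_le_card fun k' hk' => ?_).trans_eq (card_S (m (idx k)) _)
      obtain ⟨hk's, hk'k⟩ := Finset.mem_filter.1 hk'
      exact hk'k ▸ (hidx k' (hxs k' hk's)).1
    exact hφ.blockTerm_le (zero_le_one.trans hp) hγa hc₀ hc
  calc weakTerm p φ x m₀ N₀ γ
      ≤ ∑ j ∈ s.image idx,
          ENNReal.ofReal (max Cd⁻¹ Ci) * (a j / ENNReal.ofReal (φ (2 * N j + 1))) :=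
        (weakTerm_le_sum hp φ γ _ c hcard.le).trans (Finset.sum_le_sum hblock)
    _ ≤ ENNReal.ofReal (max Cd⁻¹ Ci) * ∑' j, a j / ENNReal.ofReal (φ (2 * N j + 1)) := by
        rw [← Finset.mul_sum]
        gcongr
        exact ENNReal.sum_le_tsum _

end IsGpWith

lemma ofReal_div_le_wgMorreyNorm {p : ℝ} {φ : ℕ → ℝ} {x : ℤ → ℂ} {m : ℤ} {N : ℕ} {γ : ℝ}
    (hγ : 0 < γ) (hφ : 0 < φ (2 * N + 1)) (h : ∀ k ∈ S m N, γ < ‖x k‖) :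
    ENNReal.ofReal (γ / φ (2 * N + 1)) ≤ wgMorreyNorm p φ x := by
  have hcard : weakCard x m N γ.toNNReal = 2 * N + 1 := by
    classical
    rw [weakCard, Finset.filter_true_of_mem fun k hk =>
      (Real.toNNReal_lt_iff_lt_coe hγ.le).2 ((coe_nnnorm (x k)).symm ▸ h k hk), card_S]
  refine le_of_eq_of_le ?_ (weakTerm_le_wgMorreyNorm m N (Real.toNNReal_pos.2 hγ))
  rw [weakTerm, hcard, two_mul_add_one_eq_natCast,
    ENNReal.div_self (by positivity) (ENNReal.natCast_ne_top _), ENNReal.one_rpow, mul_one,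
    ENNReal.ofReal_div_of_pos hφ, ENNReal.div_eq_inv_mul]
  rfl

lemma exists_disjoint_blocks (N : ℕ → ℕ) (a : ℕ → ℝ≥0) :
    ∃ (m : ℕ → ℤ) (x : ℤ → ℂ), (∀ j, ∀ k ∈ S (m j) (N j), ‖x k‖₊ = a j) ∧
      ∀ k, x k ≠ 0 → ∃ j, k ∈ S (m j) (N j) := by
  classical
  set P : ℕ → ℕ := fun j => ∑ i ∈ Finset.range j, (2 * N i + 1)
  set m : ℕ → ℤ := fun j => P j + N j
  have hP : ∀ {i j}, i < j → P i + (2 * N i + 1) ≤ P j := fun {i j} hij => by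
    rw [← Finset.sum_range_succ]
    exact Finset.sum_le_sum_of_subset (Finset.range_subset_range.2 hij)
  have hdisj : ∀ {i j k}, k ∈ S (m i) (N i) → k ∈ S (m j) (N j) → i = j := by
    intro i j k hi hj
    simp only [S, m, Finset.mem_Icc] at hi hj
    rcases lt_trichotomy i j with hij | rfl | hij
    · have := hP hij; omega
    · rfl
    · have := hP hij; omega
  refine ⟨m, fun k => if h : ∃ j, k ∈ S (m j) (N j) then (a (Nat.find h) : ℂ) else 0,
    fun j k hk => ?_, fun k hk => ?_⟩
  · have h : ∃ j, k ∈ S (m j) (N j) := ⟨j, hk⟩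
    simp only [dif_pos h, hdisj (Nat.find_spec h) hk]
    simp
  · by_contra h
    exact hk (dif_neg h)

theorem IsGpWith.exists_le_mul_of_forall_lt_top {p₁ p₂ : ℝ} {φ₁ φ₂ : ℕ → ℝ} {Cd Ci : ℝ}
    (hφ₂ : IsGpWith p₂ φ₂ Cd Ci) (hp₂ : 1 ≤ p₂) (hφ₁ : ∀ N : ℕ, 0 < φ₁ (2 * N + 1))
    (hsub : ∀ x : ℤ → ℂ, wgMorreyNorm p₂ φ₂ x < ⊤ → wgMorreyNorm p₁ φ₁ x < ⊤) :
    ∃ C : ℝ, 0 < C ∧ ∀ N : ℕ, φ₂ (2 * N + 1) ≤ C * φ₁ (2 * N + 1) := by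
  by_contra! h
  choose N hN using fun j : ℕ => h (2 * 4 ^ j) (by positivity)
  set b : ℕ → ℝ := fun j => (2 : ℝ)⁻¹ ^ j * φ₂ (2 * N j + 1)
  have hb : ∀ j, 0 < b j := fun j => mul_pos (by positivity) (hφ₂.pos (N j))
  set a : ℕ → ℝ≥0 := fun j => (b j).toNNReal
  obtain ⟨m, x, hblock, hsupp⟩ := exists_disjoint_blocks N a
  have hfin : wgMorreyNorm p₂ φ₂ x < ⊤ := by
    have hratio : ∀ j, (a j : ℝ≥0∞) / ENNReal.ofReal (φ₂ (2 * N j + 1)) = 2⁻¹ ^ j := by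
      intro j
      change ENNReal.ofReal (b j) / _ = _
      rw [← ENNReal.ofReal_div_of_pos (hφ₂.pos (N j)),
        mul_div_cancel_right₀ _ (hφ₂.pos (N j)).ne', ENNReal.ofReal_pow (by norm_num),
        ENNReal.ofReal_inv_of_pos two_pos, ENNReal.ofReal_ofNat]
    refine (hφ₂.wgMorreyNorm_le_tsum hp₂ m N a fun k hk => ?_).trans_lt ?_
    · obtain ⟨j, hj⟩ := hsupp k hk
      exact ⟨j, hj, (hblock j k hj).le⟩
    · simp only [hratio, ENNReal.tsum_geometric, ENNReal.one_sub_inv_two, inv_inv]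
      exact ENNReal.mul_lt_top ENNReal.ofReal_lt_top ENNReal.ofNat_lt_top
  have hlarge : ∀ j : ℕ, (j : ℝ≥0∞) ≤ wgMorreyNorm p₁ φ₁ x := by
    intro j
    have hbj := hb j
    have hφ₁j := hφ₁ (N j)
    have hreal : (j : ℝ) ≤ b j / 2 / φ₁ (2 * N j + 1) := by
      rw [le_div_iff₀ hφ₁j]
      calc (j : ℝ) * φ₁ (2 * N j + 1)
          ≤ 2 ^ j * φ₁ (2 * N j + 1) := by gcongr; exact_mod_cast Nat.lt_two_pow_self.le
        _ = (2⁻¹ * 4) ^ j * φ₁ (2 * N j + 1) := by norm_num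
        _ = 2⁻¹ ^ j * (2 * 4 ^ j * φ₁ (2 * N j + 1)) / 2 := by rw [mul_pow]; ring
        _ ≤ 2⁻¹ ^ j * φ₂ (2 * N j + 1) / 2 := by gcongr; exact (hN j).le
    have hlevel : ∀ k ∈ S (m j) (N j), b j / 2 < ‖x k‖ := fun k hk => by
      rw [← coe_nnnorm, hblock j k hk, Real.coe_toNNReal _ hbj.le]
      exact half_lt_self hbj
    rw [← ENNReal.ofReal_natCast]
    exact (ENNReal.ofReal_le_ofReal hreal).trans
      (ofReal_div_le_wgMorreyNorm (half_pos hbj) hφ₁j hlevel)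
  obtain ⟨n, hn⟩ := ENNReal.exists_nat_gt (hsub x hfin).ne
  exact (hn.trans_le (hlarge n)).false

theorem stmt19_general (p₁ p₂ : ℝ) (hp₁ : 1 ≤ p₁) (hp : p₁ ≤ p₂)
    (φ₁ φ₂ : ℕ → ℝ)
    (hφ₁pos : ∀ N : ℕ, 0 < φ₁ (2 * N + 1)) (hφ₂pos : ∀ N : ℕ, 0 < φ₂ (2 * N + 1))
    (hdec₂ : ∃ C : ℝ, 0 < C ∧ ∀ M N : ℕ, M ≤ N → C * φ₂ (2 * N + 1) ≤ φ₂ (2 * M + 1))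
    (hinc₂ : ∃ C : ℝ, 0 < C ∧ ∀ M N : ℕ, M ≤ N →
      (2 * (M : ℝ) + 1) ^ (1 / p₂) * φ₂ (2 * M + 1) ≤
        C * ((2 * (N : ℝ) + 1) ^ (1 / p₂) * φ₂ (2 * N + 1)))
    (hsub : ∀ x : ℤ → ℂ, wgMorreyNorm p₂ φ₂ x < ⊤ → wgMorreyNorm p₁ φ₁ x < ⊤) :
    ∃ C : ℝ, 0 < C ∧ ∀ x : ℤ → ℂ, wgMorreyNorm p₂ φ₂ x < ⊤ →
      wgMorreyNorm p₁ φ₁ x ≤ ENNReal.ofReal C * wgMorreyNorm p₂ φ₂ x := by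
  obtain ⟨Cd, hCd, hdec⟩ := hdec₂
  obtain ⟨Ci, -, hinc⟩ := hinc₂
  obtain ⟨C, hC, hφ⟩ := IsGpWith.exists_le_mul_of_forall_lt_top ⟨hφ₂pos, hCd, hdec, hinc⟩
    (hp₁.trans hp) hφ₁pos hsub
  exact ⟨C, hC, fun x _ => wgMorreyNorm_le_mul_of_le_mul (zero_lt_one.trans_le hp₁) hp hC hφ x⟩

theorem stmt19 (p₁ p₂ : ℝ) (hp₁ : 1 ≤ p₁) (hp : p₁ ≤ p₂)
    (φ₁ φ₂ : ℕ → ℝ)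
    (hφ₁pos : ∀ N : ℕ, 0 < φ₁ (2 * N + 1)) (hφ₂pos : ∀ N : ℕ, 0 < φ₂ (2 * N + 1))
    (hdec₁ : ∃ C : ℝ, 0 < C ∧ ∀ M N : ℕ, M ≤ N → C * φ₁ (2 * N + 1) ≤ φ₁ (2 * M + 1))
    (hinc₁ : ∃ C : ℝ, 0 < C ∧ ∀ M N : ℕ, M ≤ N →
      (2 * (M : ℝ) + 1) ^ (1 / p₁) * φ₁ (2 * M + 1) ≤
        C * ((2 * (N : ℝ) + 1) ^ (1 / p₁) * φ₁ (2 * N + 1)))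
    (hdec₂ : ∃ C : ℝ, 0 < C ∧ ∀ M N : ℕ, M ≤ N → C * φ₂ (2 * N + 1) ≤ φ₂ (2 * M + 1))
    (hinc₂ : ∃ C : ℝ, 0 < C ∧ ∀ M N : ℕ, M ≤ N →
      (2 * (M : ℝ) + 1) ^ (1 / p₂) * φ₂ (2 * M + 1) ≤
        C * ((2 * (N : ℝ) + 1) ^ (1 / p₂) * φ₂ (2 * N + 1)))
    (hsub : ∀ x : ℤ → ℂ, wgMorreyNorm p₂ φ₂ x < ⊤ → wgMorreyNorm p₁ φ₁ x < ⊤) :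
    ∃ C : ℝ, 0 < C ∧ ∀ x : ℤ → ℂ, wgMorreyNorm p₂ φ₂ x < ⊤ →
      wgMorreyNorm p₁ φ₁ x ≤ ENNReal.ofReal C * wgMorreyNorm p₂ φ₂ x :=
  stmt19_general p₁ p₂ hp₁ hp φ₁ φ₂ hφ₁pos hφ₂pos hdec₂ hinc₂ hsub
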